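/- arXiv:2508.10153 — 3 statements merged into one kernel-verified Lean document; each statement's English description precedes it below -/
import Mathlib

section
/- Let A, B ∈ F₂[[q]] be odd and let n ∈ ℕ. For all a, b ∈ F₂[[q]], the parities of T_{A,B}^k(a) and T_{A,B}^k(b) agree for every k ≤ n if and only if a ≡ b (mod q^{n+1}), i.e., if and only if q^{n+1} divides a − b. -/
open PowerSeries
open scoped Classical

/-- Shift map on `F₂[[q]]`: equals `x / q` whenever `q ∣ x`. -/
noncomputable def divq (x : PowerSeries (ZMod 2)) : PowerSeries (ZMod 2) :=
  PowerSeries.mk fun n => PowerSeries.coeff (n + 1) x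

/-- `T_{A,B}(x) = x/q` if `q ∣ x`, and `(A*x + B)/q` otherwise.  (When `A`, `B`, `x` are
all odd, `A*x + B` is divisible by `q`, so `divq` computes the true quotient there.) -/
noncomputable def Tab (A B x : PowerSeries (ZMod 2)) : PowerSeries (ZMod 2) :=
  if X ∣ x then divq x else divq (A * x + B)

/-!
Two series have the same parity iff `q ∣ a - b`. When they do, both take the same branch of
`T_{A,B}`, so `T a - T b` is `(a - b)/q` or `A (a - b)/q`; since `B` cancels and `A` is a unit,
`q^m ∣ T a - T b ↔ q^(m+1) ∣ a - b`. Induction on `n` then trades each further agreeing parity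
for one more factor of `q`.
-/

theorem PowerSeries.constantCoeff_eq_iff_X_dvd_sub {R : Type*} [CommRing R] {a b : R⟦X⟧} :
    constantCoeff a = constantCoeff b ↔ X ∣ a - b := by
  rw [X_dvd_iff, map_sub, sub_eq_zero]

lemma divq_sub (x y : PowerSeries (ZMod 2)) : divq (x - y) = divq x - divq y := by
  ext n
  simp [divq]

lemma X_mul_divq_of_X_dvd {x : PowerSeries (ZMod 2)} (h : X ∣ x) : X * divq x = x := by
  have := sub_const_eq_X_mul_shift x
  rw [X_dvd_iff.mp h, map_zero, sub_zero] at this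
  exact this.symm

lemma X_pow_dvd_divq_iff {x : PowerSeries (ZMod 2)} (h : X ∣ x) (m : ℕ) :
    X ^ m ∣ divq x ↔ X ^ (m + 1) ∣ x := by
  conv_rhs => rw [← X_mul_divq_of_X_dvd h, pow_succ']
  exact (mul_dvd_mul_iff_left X_ne_zero).symm

lemma X_pow_dvd_Tab_sub_Tab_iff {A : PowerSeries (ZMod 2)} (hA : IsUnit A)
    (B : PowerSeries (ZMod 2)) {a b : PowerSeries (ZMod 2)} (hab : X ∣ a - b) (m : ℕ) :
    X ^ m ∣ Tab A B a - Tab A B b ↔ X ^ (m + 1) ∣ a - b := by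
  have hdvd : X ∣ a ↔ X ∣ b := dvd_iff_dvd_of_dvd_sub hab
  by_cases ha : X ∣ a
  · rw [Tab, Tab, if_pos ha, if_pos (hdvd.mp ha), ← divq_sub, X_pow_dvd_divq_iff hab]
  · rw [Tab, Tab, if_neg ha, if_neg (hdvd.not.mp ha), ← divq_sub,
      show A * a + B - (A * b + B) = A * (a - b) by ring,
      X_pow_dvd_divq_iff (dvd_mul_of_dvd_right hab A), hA.dvd_mul_left]

lemma parity_iterate_Tab_eq_iff {A : PowerSeries (ZMod 2)} (hA : IsUnit A)
    (B : PowerSeries (ZMod 2)) (n : ℕ) (a b : PowerSeries (ZMod 2)) :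
    (∀ k < n, constantCoeff ((Tab A B)^[k] a) = constantCoeff ((Tab A B)^[k] b)) ↔
      X ^ n ∣ a - b := by
  induction n generalizing a b with
  | zero => simp
  | succ n ih =>
    simp only [Nat.forall_lt_succ_left, Function.iterate_zero_apply,
      Function.iterate_succ_apply]
    rw [ih, constantCoeff_eq_iff_X_dvd_sub]
    constructor
    · rintro ⟨hab, h⟩
      exact (X_pow_dvd_Tab_sub_Tab_iff hA B hab n).mp h
    · intro h
      have hab : X ∣ a - b := (dvd_pow_self X n.succ_ne_zero).trans h
      exact ⟨hab, (X_pow_dvd_Tab_sub_Tab_iff hA B hab n).mpr h⟩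

theorem Tab_parity_eq_iff_dvd_general (A B : PowerSeries (ZMod 2))
    (hA : PowerSeries.constantCoeff A = 1)
    (n : ℕ) (a b : PowerSeries (ZMod 2)) :
    (∀ k ≤ n, PowerSeries.constantCoeff ((Tab A B)^[k] a) =
        PowerSeries.constantCoeff ((Tab A B)^[k] b)) ↔
      X ^ (n + 1) ∣ a - b := by
  have hAunit : IsUnit A := isUnit_iff_constantCoeff.mpr (hA ▸ isUnit_one)
  simpa only [Nat.lt_succ_iff] using parity_iterate_Tab_eq_iff hAunit B (n + 1) a b

/-- For odd `A, B` and any `a, b`, the parities of `T_{A,B}^k(a)` and `T_{A,B}^k(b)` agree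
for all `k ≤ n` if and only if `q^{n+1} ∣ a - b`. -/
theorem Tab_parity_eq_iff_dvd (A B : PowerSeries (ZMod 2))
    (hA : PowerSeries.constantCoeff A = 1)
    (hB : PowerSeries.constantCoeff B = 1)
    (n : ℕ) (a b : PowerSeries (ZMod 2)) :
    (∀ k ≤ n, PowerSeries.constantCoeff ((Tab A B)^[k] a) =
        PowerSeries.constantCoeff ((Tab A B)^[k] b)) ↔
      X ^ (n + 1) ∣ a - b :=
  Tab_parity_eq_iff_dvd_general A B hA n a b
end

section
/- Let A, B ∈ F₂[[q]] be odd. Then A + q and A + q² are units of F₂[[q]], and an element x ∈ F₂[[q]] satisfies T_{A,B}(T_{A,B}(x)) = x if and only if x ∈ {0, B·(A+q)⁻¹, B·(A+q²)⁻¹, q·B·(A+q²)⁻¹}. In particular, the unique 2-cycle of T_{A,B} is {B·(A+q²)⁻¹, q·B·(A+q²)⁻¹}. -/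
/-!
Multiplying by `q` undoes `T`: `q · T(x)` is `x` for even `x` and `A x + B` for odd `x`. A point
of period two, `x ↦ y ↦ x`, therefore solves one of four linear systems, one per parity pattern
of `(x, y)`. In characteristic two they give `(1 - q²) x = 0` (both even), `x (A + q²) = q B` or
`x (A + q²) = B` (mixed parities), and `(A + q)(x - y) = 0`, hence `x = y` and `x (A + q) = B`
(both odd).
-/

open PowerSeries
open scoped Classical

namespace PowerSeries

instance charP {R : Type*} [CommRing R] (p : ℕ) [CharP R p] : CharP R⟦X⟧ p :=
  charP_of_injective_ringHom C_injective p

lemma eq_zero_of_eq_X_pow_mul {R : Type*} [CommRing R] {x : R⟦X⟧} {n : ℕ} (hn : n ≠ 0)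
    (h : x = X ^ n * x) : x = 0 := by
  have hunit : IsUnit (1 - X ^ n : R⟦X⟧) := by
    simp [isUnit_iff_constantCoeff, zero_pow hn]
  exact (hunit.mul_right_eq_zero).mp (by linear_combination h)

lemma constantCoeff_eq_one_iff_not_X_dvd {x : (ZMod 2)⟦X⟧} :
    constantCoeff x = 1 ↔ ¬ X ∣ x := by
  rw [X_dvd_iff]
  generalize constantCoeff x = a
  revert a
  decide

lemma not_X_dvd_of_mul_eq {B c x : (ZMod 2)⟦X⟧} (hB : constantCoeff B = 1)
    (hx : x * c = B) : ¬ X ∣ x := fun h =>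
  constantCoeff_eq_one_iff_not_X_dvd.mp hB (hx ▸ dvd_mul_of_dvd_left h c)

lemma X_dvd_mul_add {A B x : (ZMod 2)⟦X⟧} (hA : constantCoeff A = 1)
    (hB : constantCoeff B = 1) (hx : ¬ X ∣ x) : X ∣ A * x + B := by
  rw [← constantCoeff_eq_one_iff_not_X_dvd] at hx
  rw [X_dvd_iff, map_add, map_mul, hA, hx, hB]
  decide

end PowerSeries

lemma divq_X_mul (y : (ZMod 2)⟦X⟧) : divq (X * y) = y := by
  ext n
  simp [divq, coeff_succ_X_mul]

lemma X_mul_divq {x : (ZMod 2)⟦X⟧} (h : X ∣ x) : X * divq x = x := by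
  obtain ⟨y, rfl⟩ := h
  rw [divq_X_mul]

lemma Tab_X_mul (A B y : (ZMod 2)⟦X⟧) : Tab A B (X * y) = y := by
  rw [Tab, if_pos (dvd_mul_right X y), divq_X_mul]

section Tab

variable {A B : (ZMod 2)⟦X⟧} (hA : constantCoeff A = 1) (hB : constantCoeff B = 1)
include hA hB

lemma X_mul_Tab (x : (ZMod 2)⟦X⟧) : X * Tab A B x = if X ∣ x then x else A * x + B := by
  unfold Tab
  split_ifs with hx
  · exact X_mul_divq hx
  · exact X_mul_divq (X_dvd_mul_add hA hB hx)

lemma Tab_eq_iff {x y : (ZMod 2)⟦X⟧} :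
    Tab A B x = y ↔ X * y = if X ∣ x then x else A * x + B := by
  rw [← X_mul_Tab hA hB, (mul_right_injective₀ X_ne_zero).eq_iff, eq_comm]

lemma Tab_eq_self_of_mul_add_X_eq {x : (ZMod 2)⟦X⟧} (hx : x * (A + X) = B) :
    Tab A B x = x := by
  rw [Tab_eq_iff hA hB, if_neg (not_X_dvd_of_mul_eq hB hx)]
  linear_combination hx - A * x * CharTwo.two_eq_zero (R := (ZMod 2)⟦X⟧)

lemma Tab_eq_X_mul_of_mul_add_X_sq_eq {x : (ZMod 2)⟦X⟧} (hx : x * (A + X ^ 2) = B) :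
    Tab A B x = X * x := by
  rw [Tab_eq_iff hA hB, if_neg (not_X_dvd_of_mul_eq hB hx)]
  linear_combination hx - A * x * CharTwo.two_eq_zero (R := (ZMod 2)⟦X⟧)

lemma eq_zero_or_of_Tab_Tab_eq_self {x : (ZMod 2)⟦X⟧} (h : Tab A B (Tab A B x) = x) :
    x = 0 ∨ x * (A + X) = B ∨ x * (A + X ^ 2) = B ∨ x * (A + X ^ 2) = X * B := by
  have two : (2 : (ZMod 2)⟦X⟧) = 0 := CharTwo.two_eq_zero
  have hxy := X_mul_Tab hA hB x
  have hyx := X_mul_Tab hA hB (Tab A B x)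
  rw [h] at hyx
  generalize Tab A B x = y at hxy hyx
  split_ifs at hxy hyx
  · exact .inl (eq_zero_of_eq_X_pow_mul two_ne_zero (by linear_combination -hxy - X * hyx))
  · exact .inr (.inr (.inr (by linear_combination -A * hxy + X * hyx + A * X * y * two)))
  · exact .inr (.inr (.inl (by linear_combination hxy + X * hyx + A * x * two)))
  · have hAX : A + X ≠ 0 := ne_zero_of_map (f := constantCoeff) (by simp [hA])
    have hyx' : y = x := by
      have : (A + X) * (x - y) = 0 := by linear_combination hyx - hxy
      exact (sub_eq_zero.mp ((mul_eq_zero.mp this).resolve_left hAX)).symm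
    rw [hyx'] at hxy
    exact .inr (.inl (by linear_combination hxy + A * x * two))

end Tab

/-- For odd `A, B`: `A + q` and `A + q²` are units of `F₂[[q]]`, and
`T_{A,B}(T_{A,B}(x)) = x` iff `x ∈ {0, B(A+q)⁻¹, B(A+q²)⁻¹, qB(A+q²)⁻¹}`.
In particular the unique 2-cycle of `T_{A,B}` is `{B(A+q²)⁻¹, qB(A+q²)⁻¹}`. -/
theorem Tab_two_periodic_points (A B : PowerSeries (ZMod 2))
    (hA : PowerSeries.constantCoeff A = 1)
    (hB : PowerSeries.constantCoeff B = 1) :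
    IsUnit (A + X) ∧ IsUnit (A + X ^ 2) ∧
    ∀ x : PowerSeries (ZMod 2), Tab A B (Tab A B x) = x ↔
      x ∈ ({0, B * (A + X)⁻¹, B * (A + X ^ 2)⁻¹, X * (B * (A + X ^ 2)⁻¹)} :
        Set (PowerSeries (ZMod 2))) := by
  have hu : constantCoeff (A + X) = 1 := by simp [hA]
  have hv : constantCoeff (A + X ^ 2) = 1 := by simp [hA]
  have hu₀ : constantCoeff (A + X) ≠ 0 := hu ▸ one_ne_zero
  have hv₀ : constantCoeff (A + X ^ 2) ≠ 0 := hv ▸ one_ne_zero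
  refine ⟨isUnit_iff_constantCoeff.mpr (hu ▸ isUnit_one),
    isUnit_iff_constantCoeff.mpr (hv ▸ isUnit_one), fun x => ⟨fun h => ?_, fun hx => ?_⟩⟩
  · simp only [Set.mem_insert_iff, Set.mem_singleton_iff, ← mul_assoc,
      eq_mul_inv_iff_mul_eq hu₀, eq_mul_inv_iff_mul_eq hv₀]
    exact eq_zero_or_of_Tab_Tab_eq_self hA hB h
  · have hfix := Tab_eq_self_of_mul_add_X_eq hA hB ((eq_mul_inv_iff_mul_eq hu₀).mp rfl)
    have hcyc := Tab_eq_X_mul_of_mul_add_X_sq_eq hA hB ((eq_mul_inv_iff_mul_eq hv₀).mp rfl)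
    rcases hx with rfl | rfl | rfl | rfl
    · have h0 : Tab A B 0 = 0 := by simpa using Tab_X_mul A B 0
      rw [h0, h0]
    · rw [hfix, hfix]
    · rw [hcyc, Tab_X_mul]
    · rw [Tab_X_mul, hcyc]
end

section
/- For every polynomial x ∈ F₂[[q]] (i.e., every element with only finitely many nonzero coefficients), there exists k ∈ ℕ such that T_{1,1+q²}^k(x) ∈ {0, 1+q, 1, q}; that is, the T_{1,1+q²}-orbit of every polynomial contains the 2-cycle {1, q} or one of the two fixed points 0 or 1+q. -/
open PowerSeries
open scoped Classical

/-- An element of `F₂[[q]]` is a polynomial if it has only finitely many nonzero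
coefficients. -/
def IsPolynomial (x : PowerSeries (ZMod 2)) : Prop :=
  {n : ℕ | PowerSeries.coeff n x ≠ 0}.Finite

/-!
With `A = 1` both branches of `T_{1,B}` shift `x` or `x + B` down by one coefficient, so while
`x` has degree at least that of `B`, each step lowers the degree bound by one. Starting from a
polynomial, the orbit thus reaches an element of degree `< 2`, i.e. one of `0, 1, q, 1 + q`.
-/

lemma coeff_divq (x : PowerSeries (ZMod 2)) (n : ℕ) :
    coeff n (divq x) = coeff (n + 1) x :=
  coeff_mk _ _

lemma coeff_Tab_one_eq_zero {B x : PowerSeries (ZMod 2)} {n : ℕ}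
    (hB : ∀ m, n + 1 ≤ m → coeff m B = 0) (hx : ∀ m, n + 1 ≤ m → coeff m x = 0) :
    ∀ m, n ≤ m → coeff m (Tab 1 B x) = 0 := by
  intro m hm
  unfold Tab
  split_ifs
  · rw [coeff_divq, hx _ (by omega)]
  · rw [coeff_divq, one_mul, map_add, hx _ (by omega), hB _ (by omega), add_zero]

lemma coeff_iterate_Tab_one_add_X_sq_eq_zero (n : ℕ) {x : PowerSeries (ZMod 2)}
    (hx : ∀ m, n + 2 ≤ m → coeff m x = 0) :
    ∀ m, 2 ≤ m → coeff m ((Tab 1 (1 + X ^ 2))^[n] x) = 0 := by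
  induction n generalizing x with
  | zero => simpa using hx
  | succ n ih =>
    have hB : ∀ m, n + 3 ≤ m → coeff m (1 + X ^ 2 : PowerSeries (ZMod 2)) = 0 := by
      intro m hm
      rw [map_add, coeff_one, coeff_X_pow, if_neg (by omega), if_neg (by omega), add_zero]
    rw [Function.iterate_succ_apply]
    exact ih (coeff_Tab_one_eq_zero hB fun m hm => hx m (by omega))

lemma eq_C_add_C_mul_X_of_coeff_eq_zero {R : Type*} [Semiring R] {x : PowerSeries R}
    (hx : ∀ m, 2 ≤ m → coeff m x = 0) :
    x = C (coeff 0 x) + C (coeff 1 x) * X := by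
  ext (_ | _ | m)
  · simp
  · simp
  · simp [hx (m + 2) (by omega)]

lemma mem_of_coeff_eq_zero {x : PowerSeries (ZMod 2)} (hx : ∀ m, 2 ≤ m → coeff m x = 0) :
    x ∈ ({0, 1 + X, 1, X} : Set (PowerSeries (ZMod 2))) := by
  have zmod_two : ∀ a : ZMod 2, a = 0 ∨ a = 1 := by decide
  rw [eq_C_add_C_mul_X_of_coeff_eq_zero hx]
  rcases zmod_two (coeff 0 x) with h0 | h0 <;> rcases zmod_two (coeff 1 x) with h1 | h1 <;>
    simp [h0, h1]

/-- The `T_{1,1+q²}`-orbit of every polynomial reaches the 2-cycle `{1, q}` or one of the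
fixed points `0`, `1+q`. -/
theorem Tab_one_orbit_of_poly (x : PowerSeries (ZMod 2)) (hx : IsPolynomial x) :
    ∃ k : ℕ, (Tab 1 (1 + X ^ 2))^[k] x ∈
      ({0, 1 + X, 1, X} : Set (PowerSeries (ZMod 2))) := by
  obtain ⟨N, hN⟩ := hx.bddAbove
  have hxN : ∀ m, N + 2 ≤ m → coeff m x = 0 := fun m hm => by
    by_contra hm'
    have := hN hm'
    omega
  exact ⟨N, mem_of_coeff_eq_zero (coeff_iterate_Tab_one_add_X_sq_eq_zero N hxN)⟩
end
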